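/- arXiv:2410.22759 — 3 statements merged into one kernel-verified Lean document; each statement's English description precedes it below -/
import Mathlib

section
/- For every n ≥ 0, α > 0, and x ∈ (0,1), the mapped Hermite function Q_n^{(α)}(x) satisfies the Sturm-Liouville equation (1/α²)·x(1-x)·d/dx(x(1-x)·d/dx Q_n^{(α)}(x)) - 2x(1-x)·log(x/(1-x))·d/dx Q_n^{(α)}(x) + 2n·Q_n^{(α)}(x) = 0. -/
open MeasureTheory Real

/-- Physicists' Hermite polynomials. -/
noncomputable def hermiteP : ℕ → ℝ → ℝ
  | 0 => fun _ => 1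
  | 1 => fun z => 2 * z
  | n + 2 => fun z => 2 * z * hermiteP (n + 1) z - 2 * (n + 1) * hermiteP n z

lemma hrec (n : ℕ) (z : ℝ) :
    hermiteP (n + 1) z = 2 * z * hermiteP n z - 2 * n * hermiteP (n - 1) z := by
  cases n with
  | zero => simp [hermiteP]
  | succ m => simp [hermiteP]

lemma hderiv (n : ℕ) (z : ℝ) :
    HasDerivAt (hermiteP n) (2 * n * hermiteP (n - 1) z) z := by
  induction n using Nat.strong_induction_on generalizing z with
  | _ n ih =>
    match n with
    | 0 => simpa [hermiteP] using (hasDerivAt_const z (1:ℝ))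
    | 1 =>
      have : HasDerivAt (fun z : ℝ => 2 * z) 2 z := by
        simpa using (hasDerivAt_id z).const_mul 2
      simpa [hermiteP] using this
    | (m + 2) =>
      have h1 := ih (m + 1) (by omega) (z := z)
      have h0 := ih m (by omega) (z := z)
      rw [Nat.add_sub_cancel] at h1
      have hid : HasDerivAt (fun y : ℝ => y) 1 z := hasDerivAt_id z
      have hmul : HasDerivAt (fun y : ℝ => 2 * y * hermiteP (m + 1) y)
          (2 * hermiteP (m + 1) z + 2 * z * (2 * (m + 1) * hermiteP m z)) z := by
        have : HasDerivAt (fun y : ℝ => 2 * y * hermiteP (m + 1) y) _ z := ((hid.const_mul 2).mul h1)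
        convert this using 1
        push_cast
        ring
      have h2 : HasDerivAt (fun y : ℝ => 2 * (m + 1) * hermiteP m y)
          (2 * (m + 1) * (2 * m * hermiteP (m - 1) z)) z := h0.const_mul _
      have hsub := hmul.sub h2
      have key : 2 * hermiteP (m + 1) z + 2 * z * (2 * (m + 1) * hermiteP m z)
          - 2 * (m + 1) * (2 * m * hermiteP (m - 1) z)
          = 2 * ((m:ℝ) + 2) * hermiteP (m + 1) z := by
        rw [hrec m z]; ring
      rw [key] at hsub
      have hfun : hermiteP (m + 2)
          = fun y : ℝ => 2 * y * hermiteP (m + 1) y - 2 * (m + 1) * hermiteP m y := by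
        simp [hermiteP]
      have e : m + 2 - 1 = m + 1 := rfl
      rw [e, hfun]
      push_cast
      exact hsub

lemma hode (n : ℕ) (z : ℝ) :
    2 * (n:ℝ) * (2 * ((n - 1 : ℕ):ℝ) * hermiteP (n - 1 - 1) z)
      - 2 * z * (2 * n * hermiteP (n - 1) z) + 2 * n * hermiteP n z = 0 := by
  cases n with
  | zero => simp
  | succ m =>
    simp only [Nat.add_sub_cancel]
    rw [hrec m z]
    push_cast
    ring

/-- Mapped Hermite functions. -/
noncomputable def Qmhf (α : ℝ) (n : ℕ) (x : ℝ) : ℝ :=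
  hermiteP n (α * Real.log (x / (1 - x)))

/-- The weight function χ^α. -/
noncomputable def chiW (α x : ℝ) : ℝ :=
  Real.exp (-(α ^ 2) * (Real.log (x / (1 - x))) ^ 2) / (x * (1 - x))

/-- The pseudo-derivative ∂̂ₓu = x(1-x)u'. -/
noncomputable def pD (u : ℝ → ℝ) : ℝ → ℝ := fun x => x * (1 - x) * deriv u x

lemma g_hasDerivAt (α : ℝ) {x : ℝ} (hx : x ∈ Set.Ioo (0:ℝ) 1) :
    HasDerivAt (fun y : ℝ => α * Real.log (y / (1 - y))) (α / (x * (1 - x))) x := by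
  obtain ⟨h0, h1⟩ := hx
  have hx1 : (0:ℝ) < 1 - x := by linarith
  have hden : HasDerivAt (fun y : ℝ => 1 - y) (-1) x := by
    simpa using (hasDerivAt_id x).const_sub (1:ℝ)
  have hdiv : HasDerivAt (fun y : ℝ => y / (1 - y)) ((1 * (1 - x) - x * -1) / (1 - x) ^ 2) x :=
    (hasDerivAt_id x).div hden (by positivity)
  have hlog := hdiv.log (div_pos h0 hx1).ne'
  have : HasDerivAt (fun y : ℝ => α * Real.log (y / (1 - y))) _ x := hlog.const_mul α
  convert this using 1
  field_simp
  ring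

lemma Q_hasDerivAt (α : ℝ) (n : ℕ) {x : ℝ} (hx : x ∈ Set.Ioo (0:ℝ) 1) :
    HasDerivAt (Qmhf α n)
      (2 * n * hermiteP (n - 1) (α * Real.log (x / (1 - x))) * (α / (x * (1 - x)))) x :=
  (hderiv n _).comp x (g_hasDerivAt α hx)

theorem stmt9 (α : ℝ) (hα : 0 < α) (n : ℕ) (x : ℝ) (hx : x ∈ Set.Ioo (0:ℝ) 1) :
    (1 / α ^ 2) * (x * (1 - x))
        * deriv (fun y => y * (1 - y) * deriv (Qmhf α n) y) x
      - 2 * (x * (1 - x)) * Real.log (x / (1 - x)) * deriv (Qmhf α n) x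
      + 2 * n * Qmhf α n x = 0 := by
  obtain ⟨h0, h1⟩ := hx
  have hx1 : (0:ℝ) < 1 - x := by linarith
  have hne : x * (1 - x) ≠ 0 := by positivity
  set z := α * Real.log (x / (1 - x)) with hz
  have hL : Real.log (x / (1 - x)) = z / α := by rw [hz]; field_simp
  -- deriv of Qmhf at x
  have hd1 : deriv (Qmhf α n) x = 2 * n * hermiteP (n - 1) z * (α / (x * (1 - x))) :=
    (Q_hasDerivAt α n ⟨h0, h1⟩).deriv
  -- eventual equality of the inner function
  have hev : (fun y => y * (1 - y) * deriv (Qmhf α n) y)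
      =ᶠ[nhds x] (fun y => (α * (2 * n)) * hermiteP (n - 1) (α * Real.log (y / (1 - y)))) := by
    filter_upwards [isOpen_Ioo.mem_nhds (show x ∈ Set.Ioo (0:ℝ) 1 from ⟨h0, h1⟩)] with y hy
    obtain ⟨hy0, hy1⟩ := hy
    have hyne : y * (1 - y) ≠ 0 := by nlinarith [mul_pos hy0 (show (0:ℝ) < 1 - y by linarith)]
    rw [(Q_hasDerivAt α n ⟨hy0, hy1⟩).deriv]
    field_simp
  have hG : HasDerivAt (fun y => (α * (2 * n)) * hermiteP (n - 1) (α * Real.log (y / (1 - y))))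
      ((α * (2 * n)) * (2 * ((n - 1 : ℕ):ℝ) * hermiteP (n - 1 - 1) z * (α / (x * (1 - x))))) x :=
    (((hderiv (n - 1) z).comp x (g_hasDerivAt α ⟨h0, h1⟩))).const_mul _
  have hd2 : deriv (fun y => y * (1 - y) * deriv (Qmhf α n) y) x
      = (α * (2 * n)) * (2 * ((n - 1 : ℕ):ℝ) * hermiteP (n - 1 - 1) z * (α / (x * (1 - x)))) := by
    rw [hev.deriv_eq]
    exact hG.deriv
  have hQ : Qmhf α n x = hermiteP n z := by rw [Qmhf, hz]
  clear_value z
  rw [hd1, hd2]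
  have key := hode n z
  rw [hQ]
  have hαne : α ≠ 0 := ne_of_gt hα
  rw [hL]
  field_simp
  linear_combination key
end

section
/- For every polynomial-type function v in the span of {Q_0^{(α)},…,Q_N^{(α)}} and every integer k ≥ 0, the inverse inequality ‖∂̂ₓᵏv‖_{χ^{α+k}} ≤ (2α²)^{k/2}·N^{k/2}·‖v‖_{χ^α} holds, where ∂̂ₓ = x(1-x)∂ₓ is the pseudo-derivative. -/
open MeasureTheory Real

lemma hermiteP_step (n : ℕ) (t : ℝ) :
    hermiteP (n+2) t = 2*t*hermiteP (n+1) t - 2*((n:ℝ)+1)*hermiteP n t := by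
  rw [hermiteP]

noncomputable def hermitePoly : ℕ → Polynomial ℝ
  | 0 => 1
  | 1 => 2 * Polynomial.X
  | n + 2 => 2 * Polynomial.X * hermitePoly (n + 1) - Polynomial.C (2 * ((n:ℝ) + 1)) * hermitePoly n

lemma hermitePoly_step (n : ℕ) : hermitePoly (n+2)
    = 2*Polynomial.X*hermitePoly (n+1) - Polynomial.C (2*((n:ℝ)+1))*hermitePoly n := by
  rw [hermitePoly]

lemma hermiteP_eval (n : ℕ) (t : ℝ) : hermiteP n t = (hermitePoly n).eval t := by
  induction n using Nat.strong_induction_on with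
  | _ n ih =>
    match n with
    | 0 => rw [hermiteP, hermitePoly]; simp
    | 1 => rw [hermiteP, hermitePoly]; simp
    | n + 2 =>
      rw [hermiteP_step, hermitePoly_step, ih (n+1) (by omega), ih n (by omega)]
      simp

lemma hermite_rec (n : ℕ) (t : ℝ) :
    hermiteP (n + 1) t = 2 * t * hermiteP n t - 2 * n * hermiteP (n - 1) t := by
  match n with
  | 0 => rw [hermiteP, hermiteP]; simp
  | n + 1 => rw [hermiteP_step]; push_cast; simp

lemma hermiteP_hasDerivAt (n : ℕ) (t : ℝ) :
    HasDerivAt (hermiteP n) (2 * n * hermiteP (n - 1) t) t := by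
  induction n using Nat.strong_induction_on generalizing t with
  | _ n ih =>
    match n with
    | 0 =>
      have : HasDerivAt (hermiteP 0) 0 t := by
        have e : hermiteP 0 = fun _ : ℝ => (1:ℝ) := by funext z; rw [hermiteP]
        rw [e]; exact hasDerivAt_const t 1
      simpa using this
    | 1 =>
      have : HasDerivAt (hermiteP 1) 2 t := by
        have e : hermiteP 1 = fun z : ℝ => 2*z := by funext z; rw [hermiteP]
        rw [e]; simpa using (hasDerivAt_id t).const_mul (2:ℝ)
      have e0 : hermiteP 0 t = 1 := by rw [hermiteP]
      simpa [e0] using this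
    | n + 2 =>
      have h1 : HasDerivAt (hermiteP (n+1)) (2 * ((n:ℝ)+1) * hermiteP n t) t := by
        have := ih (n+1) (by omega) t
        push_cast at this
        simpa using this
      have h0 : HasDerivAt (hermiteP n) (2 * n * hermiteP (n-1) t) t := ih n (by omega) t
      have hz : HasDerivAt (fun z : ℝ => 2 * z * hermiteP (n+1) z)
          (2 * hermiteP (n+1) t + 2 * t * (2 * ((n:ℝ)+1) * hermiteP n t)) t := by
        have := ((hasDerivAt_id t).const_mul (2:ℝ)).mul h1
        refine this.congr_deriv (Eq.symm ?_)
        simp only [id_eq]; ring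
      have htot : HasDerivAt (hermiteP (n+2))
          (2 * hermiteP (n+1) t + 2 * t * (2 * ((n:ℝ)+1) * hermiteP n t)
            - 2 * ((n:ℝ)+1) * (2 * n * hermiteP (n-1) t)) t := by
        have h := hz.sub (h0.const_mul (2 * ((n:ℝ)+1)))
        have e : hermiteP (n+2) = fun z => 2 * z * hermiteP (n + 1) z - 2 * ((n:ℝ) + 1) * hermiteP n z := by
          funext z; rw [hermiteP_step]
        rw [e]
        exact h
      convert htot using 1
      have hr := hermite_rec n t
      push_cast at hr ⊢
      linear_combination (2*(n:ℝ)+2) * hr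

lemma integrable_pow_gauss {b : ℝ} (hb : 0 < b) (i : ℕ) :
    Integrable (fun t : ℝ => t ^ i * Real.exp (-b * t ^ 2)) := by
  have hmeas : AEStronglyMeasurable (fun t : ℝ => t ^ i * Real.exp (-b * t ^ 2)) volume :=
    (Continuous.mul (continuous_pow i) (Real.continuous_exp.comp (by continuity))).aestronglyMeasurable
  refine Integrable.mono' ((integrable_exp_neg_mul_sq (by positivity : (0:ℝ) < b/2)).const_mul
    (Real.exp ((i:ℝ)^2 / (2*b)))) hmeas (Filter.Eventually.of_forall fun t => ?_)
  have h1 : |t ^ i * Real.exp (-b * t ^ 2)| = |t| ^ i * Real.exp (-b * t ^ 2) := by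
    rw [abs_mul, abs_pow, abs_of_pos (Real.exp_pos _)]
  rw [Real.norm_eq_abs, h1]
  have h2 : |t| ^ i ≤ Real.exp ((i:ℝ) * |t|) := by
    calc |t| ^ i ≤ (Real.exp |t|) ^ i :=
          pow_le_pow_left₀ (abs_nonneg t) (le_trans (by linarith [abs_nonneg t]) (Real.add_one_le_exp |t|)) i
      _ = Real.exp ((i:ℝ) * |t|) := by rw [← Real.exp_nat_mul]
  calc |t| ^ i * Real.exp (-b * t ^ 2) ≤ Real.exp ((i:ℝ) * |t|) * Real.exp (-b * t ^ 2) := by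
        exact mul_le_mul_of_nonneg_right h2 (le_of_lt (Real.exp_pos _))
    _ = Real.exp ((i:ℝ) * |t| - b * t ^ 2) := by rw [← Real.exp_add]; ring_nf
    _ ≤ Real.exp ((i:ℝ)^2 / (2*b) - (b/2) * t ^ 2) := by
        apply Real.exp_le_exp.mpr
        have h3 : 0 ≤ ((i:ℝ)^2 + b^2*t^2 - 2*b*((i:ℝ)*|t|)) / (2*b) :=
          div_nonneg (by nlinarith [sq_nonneg ((i:ℝ) - b*|t|), sq_abs t]) (by linarith)
        have e : ((i:ℝ)^2 + b^2*t^2 - 2*b*((i:ℝ)*|t|)) / (2*b)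
            = (i:ℝ)^2/(2*b) - (b/2)*t^2 - ((i:ℝ)*|t| - b*t^2) := by
          field_simp; ring
        linarith [e ▸ h3]
    _ = Real.exp ((i:ℝ)^2 / (2*b)) * Real.exp (-(b/2) * t ^ 2) := by
        rw [← Real.exp_add]; ring_nf

lemma integrable_poly_gauss {b : ℝ} (hb : 0 < b) (p : Polynomial ℝ) :
    Integrable (fun t : ℝ => p.eval t * Real.exp (-b * t ^ 2)) := by
  have : (fun t : ℝ => p.eval t * Real.exp (-b * t ^ 2))
      = fun t : ℝ => ∑ i ∈ Finset.range (p.natDegree + 1),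
          p.coeff i * (t ^ i * Real.exp (-b * t ^ 2)) := by
    funext t
    rw [Polynomial.eval_eq_sum_range, Finset.sum_mul]
    simp [mul_assoc]
  rw [this]
  exact integrable_finset_sum _ fun i _ => ((integrable_pow_gauss hb i).const_mul _)

lemma integral_deriv_gauss_zero (f g : ℝ → ℝ) (p q : Polynomial ℝ)
    (hf : ∀ t, f t = p.eval t * Real.exp (-(1:ℝ) * t ^ 2))
    (hg : ∀ t, g t = q.eval t * Real.exp (-(1:ℝ) * t ^ 2))
    (hderiv : ∀ t, HasDerivAt f (g t) t) :
    ∫ t : ℝ, g t = 0 := by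
  apply integral_eq_zero_of_hasDerivAt_of_integrable hderiv
  · exact (integrable_poly_gauss one_pos q).congr (Filter.Eventually.of_forall fun t => (hg t).symm)
  · exact (integrable_poly_gauss one_pos p).congr (Filter.Eventually.of_forall fun t => (hf t).symm)

noncomputable def Iher (m n : ℕ) : ℝ :=
  ∫ t : ℝ, hermiteP m t * hermiteP n t * Real.exp (-(1:ℝ) * t ^ 2)

lemma integrable_herm2 (a b : ℕ) :
    Integrable (fun t : ℝ => hermiteP a t * hermiteP b t * Real.exp (-(1:ℝ) * t ^ 2)) := by
  refine (integrable_poly_gauss one_pos (hermitePoly a * hermitePoly b)).congr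
    (Filter.Eventually.of_forall fun t => ?_)
  simp [hermiteP_eval]

lemma Iher_symm (m n : ℕ) : Iher m n = Iher n m := by
  unfold Iher
  congr 1; funext t; ring

lemma gauss_deriv (t : ℝ) :
    HasDerivAt (fun s : ℝ => Real.exp (-(1:ℝ) * s ^ 2)) (Real.exp (-(1:ℝ) * t ^ 2) * (-2 * t)) t := by
  have h : HasDerivAt (fun s : ℝ => -(1:ℝ) * s ^ 2) (-2 * t) t := by
    have := (hasDerivAt_pow 2 t).const_mul (-(1:ℝ))
    refine this.congr_deriv (Eq.symm ?_); push_cast; ring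
  simpa [mul_comm] using h.exp

lemma Iher_step (m n : ℕ) : Iher m (n + 1) = 2 * m * Iher (m - 1) n := by
  have key : ∫ t : ℝ, (2 * (m:ℝ) * hermiteP (m-1) t * hermiteP n t
      - hermiteP m t * hermiteP (n+1) t) * Real.exp (-(1:ℝ) * t ^ 2) = 0 := by
    apply integral_deriv_gauss_zero
      (fun t => hermiteP m t * hermiteP n t * Real.exp (-(1:ℝ) * t ^ 2)) _
      (hermitePoly m * hermitePoly n)
      (Polynomial.C (2*(m:ℝ)) * hermitePoly (m-1) * hermitePoly n
        - hermitePoly m * hermitePoly (n+1))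
    · intro t; simp [hermiteP_eval]
    · intro t; simp [hermiteP_eval]
    · intro t
      have h := ((hermiteP_hasDerivAt m t).mul (hermiteP_hasDerivAt n t)).mul (gauss_deriv t)
      refine h.congr_deriv (Eq.symm ?_)
      simp only [Pi.mul_apply]
      linear_combination (-(hermiteP m t) * Real.exp (-(1:ℝ)*t^2)) * hermite_rec n t
  have h1 : Integrable (fun t : ℝ => 2 * (m:ℝ) * (hermiteP (m-1) t * hermiteP n t * Real.exp (-(1:ℝ) * t ^ 2))) :=
    (integrable_herm2 (m-1) n).const_mul _
  have h2 := integrable_herm2 m (n+1)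
  have e : (fun t : ℝ => (2 * (m:ℝ) * hermiteP (m-1) t * hermiteP n t
      - hermiteP m t * hermiteP (n+1) t) * Real.exp (-(1:ℝ) * t ^ 2))
      = fun t => 2 * (m:ℝ) * (hermiteP (m-1) t * hermiteP n t * Real.exp (-(1:ℝ) * t ^ 2))
        - hermiteP m t * hermiteP (n+1) t * Real.exp (-(1:ℝ) * t ^ 2) := by
    funext t; ring
  rw [e] at key
  rw [integral_sub h1 h2, integral_const_mul _, sub_eq_zero] at key
  unfold Iher
  rw [← key]

noncomputable def gam (n : ℕ) : ℝ := 2 ^ n * n.factorial * Real.sqrt π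

lemma Iher_base : Iher 0 0 = Real.sqrt π := by
  unfold Iher
  have e0 : ∀ t : ℝ, hermiteP 0 t = 1 := fun t => by rw [hermiteP]
  simp only [e0, one_mul]
  rw [integral_gaussian]
  simp

lemma Iher_eq (n m : ℕ) : Iher m n = if m = n then gam n else 0 := by
  induction n generalizing m with
  | zero =>
    match m with
    | 0 => simpa [gam] using Iher_base
    | m + 1 =>
      rw [Iher_symm, Iher_step]
      simp
  | succ n ih =>
    rw [Iher_step]
    match m with
    | 0 => simp
    | m + 1 =>
      simp only [Nat.add_sub_cancel, ih m]
      by_cases h : m = n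
      · subst h
        simp [gam, Nat.factorial_succ]
        push_cast; ring
      · simp [h, Nat.succ_inj]

noncomputable def sigm (t : ℝ) : ℝ := Real.exp t / (1 + Real.exp t)

lemma sigm_pos (t : ℝ) : 0 < sigm t := by
  unfold sigm; positivity

lemma one_sub_sigm (t : ℝ) : 1 - sigm t = 1 / (1 + Real.exp t) := by
  unfold sigm
  have h : (0:ℝ) < 1 + Real.exp t := by positivity
  field_simp
  ring

lemma sigm_lt_one (t : ℝ) : sigm t < 1 := by
  have h := one_sub_sigm t
  have : (0:ℝ) < 1 / (1 + Real.exp t) := by positivity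
  linarith

lemma sigm_mul_one_sub_pos (t : ℝ) : 0 < sigm t * (1 - sigm t) :=
  mul_pos (sigm_pos t) (by linarith [sigm_lt_one t])

lemma sigm_ratio (t : ℝ) : sigm t / (1 - sigm t) = Real.exp t := by
  rw [one_sub_sigm]
  unfold sigm
  have h : (0:ℝ) < 1 + Real.exp t := by positivity
  field_simp

lemma log_sigm (t : ℝ) : Real.log (sigm t / (1 - sigm t)) = t := by
  rw [sigm_ratio, Real.log_exp]

lemma sigm_hasDerivAt (t : ℝ) : HasDerivAt sigm (sigm t * (1 - sigm t)) t := by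
  have h : (0:ℝ) < 1 + Real.exp t := by positivity
  have hadd : HasDerivAt (fun s => 1 + Real.exp s) (Real.exp t) t := by
    simpa using (Real.hasDerivAt_exp t).const_add 1
  have hd : HasDerivAt (fun s => Real.exp s / (1 + Real.exp s))
      ((Real.exp t * (1 + Real.exp t) - Real.exp t * Real.exp t) / (1 + Real.exp t)^2) t :=
    (Real.hasDerivAt_exp t).div hadd (by positivity)
  have e : (Real.exp t * (1 + Real.exp t) - Real.exp t * Real.exp t) / (1 + Real.exp t)^2
      = sigm t * (1 - sigm t) := by
    rw [one_sub_sigm]; unfold sigm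
    field_simp
    ring
  rw [← e]; exact hd

lemma sigm_injective : Function.Injective sigm := by
  intro a b h
  have := log_sigm a
  rw [h, log_sigm] at this
  exact this.symm

lemma sigm_surj (x : ℝ) (hx : x ∈ Set.Ioo (0:ℝ) 1) : sigm (Real.log (x / (1 - x))) = x := by
  obtain ⟨h0, h1⟩ := hx
  have hr : (0:ℝ) < x / (1 - x) := div_pos h0 (by linarith)
  unfold sigm
  rw [Real.exp_log hr]
  have : 1 - x > 0 := by linarith
  field_simp
  ring

lemma sigm_range : sigm '' Set.univ = Set.Ioo (0:ℝ) 1 := by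
  apply Set.eq_of_subset_of_subset
  · rintro y ⟨t, -, rfl⟩
    exact ⟨sigm_pos t, sigm_lt_one t⟩
  · intro x hx
    exact ⟨Real.log (x / (1 - x)), Set.mem_univ _, sigm_surj x hx⟩

lemma cov (F : ℝ → ℝ) :
    ∫ x in Set.Ioo (0:ℝ) 1, F x = ∫ t : ℝ, sigm t * (1 - sigm t) * F (sigm t) := by
  have h := integral_image_eq_integral_abs_deriv_smul MeasurableSet.univ
    (fun x _ => (sigm_hasDerivAt x).hasDerivWithinAt) (sigm_injective.injOn) F
  rw [sigm_range] at h
  rw [h, setIntegral_univ]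
  congr 1; funext t
  rw [smul_eq_mul, abs_of_pos (sigm_mul_one_sub_pos t)]

/-- combination of mapped Hermite functions -/
noncomputable def Gf (α : ℝ) (N : ℕ) (d : ℕ → ℝ) (t : ℝ) : ℝ :=
  ∑ i ∈ Finset.range (N+1), d i * hermiteP i (α * t)

/-- shift operator (action of pseudo-derivative on coefficients) -/
noncomputable def Tsh (α : ℝ) (d : ℕ → ℝ) : ℕ → ℝ := fun i => 2 * α * (i+1) * d (i+1)

lemma gam_nonneg (n : ℕ) : 0 ≤ gam n := by
  unfold gam; positivity

lemma gam_succ (n : ℕ) : gam (n+1) = 2*((n:ℝ)+1) * gam n := by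
  unfold gam
  rw [Nat.factorial_succ]
  push_cast; ring

lemma Tsh_supp {α : ℝ} {N : ℕ} {d : ℕ → ℝ} (h : ∀ i, N < i → d i = 0) :
    ∀ i, N < i → Tsh α d i = 0 := by
  intro i hi
  unfold Tsh
  rw [h (i+1) (by omega)]
  ring

lemma Gf_hasDerivAt {α : ℝ} {N : ℕ} {d : ℕ → ℝ} (hsupp : ∀ i, N < i → d i = 0) (t : ℝ) :
    HasDerivAt (Gf α N d) (Gf α N (Tsh α d) t) t := by
  have hterm : ∀ i : ℕ, HasDerivAt (fun s => d i * hermiteP i (α * s))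
      (d i * (2 * i * hermiteP (i-1) (α*t) * α)) t := by
    intro i
    have h1 : HasDerivAt (fun s : ℝ => α * s) α t := by
      simpa using (hasDerivAt_id t).const_mul α
    have h2 := (hermiteP_hasDerivAt i (α*t)).comp t h1
    exact h2.const_mul (d i)
  have hsum : HasDerivAt (Gf α N d)
      (∑ i ∈ Finset.range (N+1), d i * (2 * i * hermiteP (i-1) (α*t) * α)) t := by
    exact HasDerivAt.fun_sum fun i _ => hterm i
  convert hsum using 1
  rw [Finset.sum_range_succ' (fun i => d i * (2 * (i:ℝ) * hermiteP (i-1) (α*t) * α)) N]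
  unfold Gf
  rw [Finset.sum_range_succ (fun i => Tsh α d i * hermiteP i (α*t)) N]
  have hlast : Tsh α d N * hermiteP N (α*t) = 0 := by
    unfold Tsh; rw [hsupp (N+1) (by omega)]; ring
  rw [hlast, add_zero]
  simp only [Nat.cast_zero, Nat.add_sub_cancel]
  rw [show (d 0 * (2 * (0:ℝ) * hermiteP (0-1) (α*t) * α)) = 0 by ring, add_zero]
  apply Finset.sum_congr rfl
  intro i _
  unfold Tsh
  push_cast
  ring

/-- polynomial representing Gf -/
noncomputable def GfPoly (α : ℝ) (N : ℕ) (d : ℕ → ℝ) : Polynomial ℝ :=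
  ∑ i ∈ Finset.range (N+1), Polynomial.C (d i) * (hermitePoly i).comp (Polynomial.C α * Polynomial.X)

lemma Gf_eval (α : ℝ) (N : ℕ) (d : ℕ → ℝ) (t : ℝ) :
    Gf α N d t = (GfPoly α N d).eval t := by
  unfold Gf GfPoly
  rw [Polynomial.eval_finset_sum]
  apply Finset.sum_congr rfl
  intro i _
  simp [Polynomial.eval_comp, hermiteP_eval]

lemma integrable_Gf_sq {b α : ℝ} (hb : 0 < b) (N : ℕ) (d : ℕ → ℝ) :
    Integrable (fun t : ℝ => (Gf α N d t)^2 * Real.exp (-b * t^2)) := by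
  refine (integrable_poly_gauss hb ((GfPoly α N d)^2)).congr
    (Filter.Eventually.of_forall fun t => ?_)
  simp [Gf_eval, sq]

lemma Gf_norm {α : ℝ} (hα : 0 < α) (N : ℕ) (d : ℕ → ℝ) :
    ∫ t : ℝ, (Gf α N d t)^2 * Real.exp (-(α^2) * t^2)
      = (∑ i ∈ Finset.range (N+1), (d i)^2 * gam i) / α := by
  have hint : ∀ i j : ℕ, Integrable (fun t : ℝ =>
      d i * hermiteP i (α*t) * (d j * hermiteP j (α*t)) * Real.exp (-(α^2) * t^2)) := by
    intro i j
    refine (integrable_poly_gauss (by positivity : (0:ℝ) < α^2)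
      (Polynomial.C (d i * d j) * ((hermitePoly i * hermitePoly j).comp
        (Polynomial.C α * Polynomial.X)))).congr
      (Filter.Eventually.of_forall fun t => ?_)
    simp [Polynomial.eval_comp, hermiteP_eval]
    ring
  have e : ∀ t : ℝ, (Gf α N d t)^2 * Real.exp (-(α^2) * t^2)
      = ∑ i ∈ Finset.range (N+1), ∑ j ∈ Finset.range (N+1),
          d i * hermiteP i (α*t) * (d j * hermiteP j (α*t)) * Real.exp (-(α^2) * t^2) := by
    intro t
    rw [sq]
    unfold Gf
    rw [Finset.sum_mul_sum, Finset.sum_mul]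
    apply Finset.sum_congr rfl
    intro i _
    rw [Finset.sum_mul]
  rw [integral_congr_ae (Filter.Eventually.of_forall e)]
  rw [integral_finset_sum _ (fun i _ => integrable_finset_sum _ (fun j _ => hint i j))]
  have inner : ∀ i ∈ Finset.range (N+1),
      (∫ t : ℝ, ∑ j ∈ Finset.range (N+1),
        d i * hermiteP i (α*t) * (d j * hermiteP j (α*t)) * Real.exp (-(α^2) * t^2))
      = (d i)^2 * gam i / α := by
    intro i hi
    rw [integral_finset_sum _ (fun j _ => hint i j)]
    have hone : ∀ j ∈ Finset.range (N+1),
        (∫ t : ℝ, d i * hermiteP i (α*t) * (d j * hermiteP j (α*t)) * Real.exp (-(α^2) * t^2))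
        = (d i * d j) * ((1/α) * Iher i j) := by
      intro j _
      have e2 : ∀ t : ℝ, d i * hermiteP i (α*t) * (d j * hermiteP j (α*t)) * Real.exp (-(α^2) * t^2)
          = (d i * d j) * ((fun s => hermiteP i s * hermiteP j s * Real.exp (-(1:ℝ) * s^2)) (α * t)) := by
        intro t
        have : -(1:ℝ) * (α*t)^2 = -(α^2) * t^2 := by ring
        simp only [this]
        ring
      rw [integral_congr_ae (Filter.Eventually.of_forall e2), integral_const_mul]
      congr 1
      rw [MeasureTheory.Measure.integral_comp_mul_left
        (fun s => hermiteP i s * hermiteP j s * Real.exp (-(1:ℝ) * s^2)) α]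
      rw [smul_eq_mul, abs_of_pos (by positivity : (0:ℝ) < α⁻¹)]
      rw [one_div]
      rfl
    rw [Finset.sum_congr rfl hone]
    have : ∀ j ∈ Finset.range (N+1), (d i * d j) * ((1/α) * Iher i j)
        = if i = j then (d i)^2 * gam i / α else 0 := by
      intro j _
      rw [Iher_eq]
      by_cases h : i = j
      · subst h; simp; ring
      · simp [h]
    rw [Finset.sum_congr rfl this, Finset.sum_ite_eq (Finset.range (N+1)) i
      (fun j => (d i)^2 * gam i / α)]
    simp [hi]
  rw [Finset.sum_congr rfl inner, ← Finset.sum_div]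

lemma step_sum {α : ℝ} {N : ℕ} {d : ℕ → ℝ} (hsupp : ∀ i, N < i → d i = 0) :
    ∑ i ∈ Finset.range (N+1), (Tsh α d i)^2 * gam i
      ≤ 2*α^2*N * ∑ i ∈ Finset.range (N+1), (d i)^2 * gam i := by
  have hterm : ∀ i ∈ Finset.range (N+1),
      (Tsh α d i)^2 * gam i ≤ 2*α^2*N * ((d (i+1))^2 * gam (i+1)) := by
    intro i hi
    rcases Nat.lt_or_ge i N with hiN | hiN
    · have C0 : 0 ≤ 4*α^2*((i:ℝ)+1)*(d (i+1))^2 * gam i := by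
        have := gam_nonneg i
        positivity
      have hle : ((i:ℝ)+1) ≤ (N:ℝ) := by exact_mod_cast hiN
      have key := mul_le_mul_of_nonneg_right hle C0
      have e1 : (Tsh α d i)^2 * gam i
          = ((i:ℝ)+1) * (4*α^2*((i:ℝ)+1)*(d (i+1))^2 * gam i) := by
        unfold Tsh; push_cast; ring
      have e2 : 2*α^2*(N:ℝ)*((d (i+1))^2 * gam (i+1))
          = (N:ℝ) * (4*α^2*((i:ℝ)+1)*(d (i+1))^2 * gam i) := by
        rw [gam_succ]; ring
      rw [e1, e2]; exact key
    · have h0 : d (i+1) = 0 := hsupp (i+1) (by omega)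
      have h1 : Tsh α d i = 0 := by unfold Tsh; rw [h0]; ring
      rw [h0, h1]
      simp
  calc ∑ i ∈ Finset.range (N+1), (Tsh α d i)^2 * gam i
      ≤ ∑ i ∈ Finset.range (N+1), 2*α^2*N * ((d (i+1))^2 * gam (i+1)) :=
        Finset.sum_le_sum hterm
    _ = 2*α^2*N * ∑ i ∈ Finset.range (N+1), (d (i+1))^2 * gam (i+1) := by
        rw [Finset.mul_sum]
    _ ≤ 2*α^2*N * ∑ i ∈ Finset.range (N+1), (d i)^2 * gam i := by
        apply mul_le_mul_of_nonneg_left _ (by positivity)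
        have e := Finset.sum_range_succ' (fun i => (d i)^2 * gam i) N
        have h2 : ∑ i ∈ Finset.range (N+1), (d (i+1))^2 * gam (i+1)
            = ∑ i ∈ Finset.range N, (d (i+1))^2 * gam (i+1) := by
          rw [Finset.sum_range_succ, hsupp (N+1) (by omega)]
          simp
        rw [h2, e]
        have : 0 ≤ (d 0)^2 * gam 0 := by
          have := gam_nonneg 0; positivity
        linarith

lemma Tsh_iter_supp {α : ℝ} {N : ℕ} {a : ℕ → ℝ} (hsupp : ∀ i, N < i → a i = 0) (k : ℕ) :
    ∀ i, N < i → (Tsh α)^[k] a i = 0 := by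
  induction k with
  | zero => simpa using hsupp
  | succ k ih =>
    intro i hi
    rw [Function.iterate_succ_apply']
    exact Tsh_supp ih i hi

lemma iterate_sum_le {α : ℝ} {N : ℕ} {a : ℕ → ℝ} (hsupp : ∀ i, N < i → a i = 0) (k : ℕ) :
    ∑ i ∈ Finset.range (N+1), ((Tsh α)^[k] a i)^2 * gam i
      ≤ (2*α^2*N)^k * ∑ i ∈ Finset.range (N+1), (a i)^2 * gam i := by
  induction k with
  | zero => simp
  | succ k ih =>
    have hsuppk : ∀ i, N < i → (Tsh α)^[k] a i = 0 := Tsh_iter_supp hsupp k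
    rw [Function.iterate_succ_apply']
    calc ∑ i ∈ Finset.range (N+1), (Tsh α ((Tsh α)^[k] a) i)^2 * gam i
        ≤ 2*α^2*N * ∑ i ∈ Finset.range (N+1), ((Tsh α)^[k] a i)^2 * gam i :=
          step_sum hsuppk
      _ ≤ 2*α^2*N * ((2*α^2*N)^k * ∑ i ∈ Finset.range (N+1), (a i)^2 * gam i) := by
          apply mul_le_mul_of_nonneg_left ih (by positivity)
      _ = (2*α^2*N)^(k+1) * ∑ i ∈ Finset.range (N+1), (a i)^2 * gam i := by ring

lemma L_hasDerivAt {x : ℝ} (hx : x ∈ Set.Ioo (0:ℝ) 1) :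
    HasDerivAt (fun y : ℝ => Real.log (y/(1-y))) (1/(x*(1-x))) x := by
  obtain ⟨h0, h1⟩ := hx
  have h1x : (0:ℝ) < 1 - x := by linarith
  have hdiv : HasDerivAt (fun y : ℝ => y/(1-y)) ((1*(1-x) - x*(0-1))/(1-x)^2) x :=
    (hasDerivAt_id x).div ((hasDerivAt_const x (1:ℝ)).sub (hasDerivAt_id x)) (by positivity)
  have hne : x/(1-x) ≠ 0 := by positivity
  have hlog := hdiv.log hne
  convert hlog using 1
  field_simp
  ring


lemma pD_iter {α : ℝ} {N : ℕ} {a : ℕ → ℝ} (hsupp : ∀ i, N < i → a i = 0) (v : ℝ → ℝ)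
    (hv : ∀ x, v x = Gf α N a (Real.log (x/(1-x)))) (k : ℕ) :
    ∀ x ∈ Set.Ioo (0:ℝ) 1, pD^[k] v x = Gf α N ((Tsh α)^[k] a) (Real.log (x/(1-x))) := by
  induction k with
  | zero => intro x _; simpa using hv x
  | succ k ih =>
    intro x hx
    rw [Function.iterate_succ_apply']
    obtain ⟨h0, h1⟩ := hx
    have h1x : (0:ℝ) < 1 - x := by linarith
    have hev : pD^[k] v =ᶠ[nhds x] fun y => Gf α N ((Tsh α)^[k] a) (Real.log (y/(1-y))) := by
      filter_upwards [isOpen_Ioo.mem_nhds ⟨h0, h1⟩] with y hy using ih y hy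
    have hGL : HasDerivAt (fun y => Gf α N ((Tsh α)^[k] a) (Real.log (y/(1-y))))
        (Gf α N ((Tsh α)^[k+1] a) (Real.log (x/(1-x))) * (1/(x*(1-x)))) x := by
      have hG := Gf_hasDerivAt (α := α) (Tsh_iter_supp (α := α) (N := N) hsupp k) (Real.log (x/(1-x)))
      have hcomp := hG.comp x (L_hasDerivAt ⟨h0, h1⟩)
      rw [Function.iterate_succ_apply']
      exact hcomp
    show x * (1-x) * deriv (pD^[k] v) x = _
    rw [hev.deriv_eq, hGL.deriv]
    field_simp

theorem stmt12 (α : ℝ) (hα : 0 < α) (N : ℕ) (k : ℕ)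
    (v : ℝ → ℝ) (c : Fin (N + 1) → ℝ) (hv : ∀ x, v x = ∑ i, c i * Qmhf α i x) :
    Real.sqrt (∫ x in Set.Ioo (0:ℝ) 1, (pD^[k] v x) ^ 2 * chiW (α + k) x)
      ≤ Real.sqrt ((2 * α ^ 2) ^ k * (N : ℝ) ^ k)
        * Real.sqrt (∫ x in Set.Ioo (0:ℝ) 1, (v x) ^ 2 * chiW α x) := by
  set a : ℕ → ℝ := fun i => if h : i < N+1 then c ⟨i, h⟩ else 0 with ha
  have hsupp : ∀ i, N < i → a i = 0 := by
    intro i hi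
    simp only [ha]
    rw [dif_neg (by omega)]
  have hvG : ∀ x, v x = Gf α N a (Real.log (x/(1-x))) := by
    intro x
    rw [hv]
    unfold Gf
    rw [← Fin.sum_univ_eq_sum_range (fun i => a i * hermiteP i (α * Real.log (x/(1-x)))) (N+1)]
    apply Finset.sum_congr rfl
    intro i _
    simp only [ha]
    rw [dif_pos i.isLt]
    rfl
  set dk : ℕ → ℝ := (Tsh α)^[k] a with hdk
  -- LHS integral
  have hA : (∫ x in Set.Ioo (0:ℝ) 1, (pD^[k] v x) ^ 2 * chiW (α + k) x)
      = ∫ t : ℝ, (Gf α N dk t)^2 * Real.exp (-((α+(k:ℝ))^2) * t^2) := by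
    rw [cov]
    apply integral_congr_ae (Filter.Eventually.of_forall fun t => ?_)
    have hmem : sigm t ∈ Set.Ioo (0:ℝ) 1 := ⟨sigm_pos t, sigm_lt_one t⟩
    rw [pD_iter hsupp v hvG k (sigm t) hmem]
    unfold chiW
    rw [log_sigm]
    have hne : sigm t * (1 - sigm t) ≠ 0 := ne_of_gt (sigm_mul_one_sub_pos t)
    field_simp
    exact mul_div_cancel_left₀ _ hne
  have hB : (∫ x in Set.Ioo (0:ℝ) 1, (v x) ^ 2 * chiW α x)
      = ∫ t : ℝ, (Gf α N a t)^2 * Real.exp (-(α^2) * t^2) := by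
    rw [cov]
    apply integral_congr_ae (Filter.Eventually.of_forall fun t => ?_)
    rw [hvG (sigm t)]
    unfold chiW
    rw [log_sigm]
    have hne : sigm t * (1 - sigm t) ≠ 0 := ne_of_gt (sigm_mul_one_sub_pos t)
    field_simp
    exact mul_div_cancel_left₀ _ hne
  have hmono : (∫ t : ℝ, (Gf α N dk t)^2 * Real.exp (-((α+(k:ℝ))^2) * t^2))
      ≤ ∫ t : ℝ, (Gf α N dk t)^2 * Real.exp (-(α^2) * t^2) := by
    apply integral_mono_of_nonneg
    · exact Filter.Eventually.of_forall fun t => by positivity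
    · exact integrable_Gf_sq (by positivity) N dk
    · apply Filter.Eventually.of_forall fun t => ?_
      apply mul_le_mul_of_nonneg_left _ (by positivity)
      apply Real.exp_le_exp.mpr
      have hk : (0:ℝ) ≤ (k:ℝ) := Nat.cast_nonneg k
      nlinarith [sq_nonneg t, sq_nonneg ((k:ℝ)*t), mul_nonneg (mul_nonneg hα.le hk) (sq_nonneg t)]
  have hchain : (∫ x in Set.Ioo (0:ℝ) 1, (pD^[k] v x) ^ 2 * chiW (α + k) x)
      ≤ ((2*α^2)^k * (N:ℝ)^k) * ∫ x in Set.Ioo (0:ℝ) 1, (v x) ^ 2 * chiW α x := by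
    rw [hA, hB, Gf_norm hα N a]
    calc (∫ t : ℝ, (Gf α N dk t)^2 * Real.exp (-((α+(k:ℝ))^2) * t^2))
        ≤ ∫ t : ℝ, (Gf α N dk t)^2 * Real.exp (-(α^2) * t^2) := hmono
      _ = (∑ i ∈ Finset.range (N+1), (dk i)^2 * gam i) / α := Gf_norm hα N dk
      _ ≤ ((2*α^2*N)^k * ∑ i ∈ Finset.range (N+1), (a i)^2 * gam i) / α := by
          gcongr
          exact iterate_sum_le hsupp k
      _ = ((2*α^2)^k * (N:ℝ)^k) * ((∑ i ∈ Finset.range (N+1), (a i)^2 * gam i) / α) := by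
          rw [mul_pow]; ring
  calc Real.sqrt (∫ x in Set.Ioo (0:ℝ) 1, (pD^[k] v x) ^ 2 * chiW (α + k) x)
      ≤ Real.sqrt (((2*α^2)^k * (N:ℝ)^k) * ∫ x in Set.Ioo (0:ℝ) 1, (v x) ^ 2 * chiW α x) :=
        Real.sqrt_le_sqrt hchain
    _ = Real.sqrt ((2*α^2)^k * (N:ℝ)^k) * Real.sqrt (∫ x in Set.Ioo (0:ℝ) 1, (v x) ^ 2 * chiW α x) :=
        Real.sqrt_mul (by positivity) _
end

section
/- Let K be the integral operator (Kv)(x) = ∫₀ˣ log(x-s)·k(s,x)·v(s) ds on [0,1], where k is continuous on [0,1]² and k(s,·) ∈ C^{0,κ}([0,1]) uniformly in s, for some 0 < κ < 1. Then there is a constant c such that |(Kv)(x) - (Kv)(y)| ≤ c·‖v‖_∞·|x-y|^κ for all x ≠ y in [0,1] and all v ∈ C([0,1]). -/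
open MeasureTheory Real

lemma aux_rpow_subadd {a b p : ℝ} (ha : 0 ≤ a) (hb : 0 ≤ b) (hp : 0 ≤ p) (hp1 : p ≤ 1) :
    (a + b) ^ p ≤ a ^ p + b ^ p := by
  have h := NNReal.rpow_add_le_add_rpow a.toNNReal b.toNNReal hp hp1
  rw [← NNReal.coe_le_coe] at h
  push_cast at h
  rwa [Real.coe_toNNReal a ha, Real.coe_toNNReal b hb] at h

lemma aux_log_abs_le {κ t : ℝ} (hκ1 : κ < 1) (ht : 0 < t) (ht1 : t ≤ 1) :
    |Real.log t| ≤ t ^ (κ - 1) / (1 - κ) := by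
  have h1κ : 0 < 1 - κ := by linarith
  rw [abs_of_nonpos (Real.log_nonpos ht.le ht1), le_div_iff₀ h1κ]
  have h2 : Real.log (t ^ (κ - 1)) ≤ t ^ (κ - 1) - 1 :=
    Real.log_le_sub_one_of_pos (Real.rpow_pos_of_pos ht _)
  rw [Real.log_rpow ht] at h2
  nlinarith [Real.rpow_pos_of_pos ht (κ - 1)]

lemma aux_log_sub_log {κ b h : ℝ} (hκ : 0 < κ) (hκ1 : κ ≤ 1) (hb : 0 < b) (hh : 0 < h) :
    Real.log (b + h) - Real.log b ≤ h ^ κ * b ^ (-κ) / κ := by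
  rw [← Real.log_div (by positivity) hb.ne']
  have h2 : ((b + h) / b) ^ κ ≤ (b ^ κ + h ^ κ) / b ^ κ := by
    rw [Real.div_rpow (by positivity) hb.le]
    gcongr
    exact aux_rpow_subadd hb.le hh.le hκ.le hκ1
  have h3 : Real.log (((b + h) / b) ^ κ) ≤ ((b + h) / b) ^ κ - 1 :=
    Real.log_le_sub_one_of_pos (by positivity)
  rw [Real.log_rpow (by positivity)] at h3
  have h4 : (b ^ κ + h ^ κ) / b ^ κ - 1 = h ^ κ * b ^ (-κ) := by
    rw [Real.rpow_neg hb.le]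
    have : b ^ κ ≠ 0 := (Real.rpow_pos_of_pos hb κ).ne'
    field_simp
    ring
  rw [le_div_iff₀ hκ]
  nlinarith

theorem stmt16 (κ : ℝ) (hκ : 0 < κ) (hκ1 : κ < 1) (k : ℝ → ℝ → ℝ)
    (hk : ContinuousOn (fun p : ℝ × ℝ => k p.1 p.2)
      (Set.Icc (0:ℝ) 1 ×ˢ Set.Icc (0:ℝ) 1))
    (L : ℝ)
    (hHol : ∀ s ∈ Set.Icc (0:ℝ) 1, ∀ x ∈ Set.Icc (0:ℝ) 1, ∀ y ∈ Set.Icc (0:ℝ) 1,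
      |k s x - k s y| ≤ L * |x - y| ^ κ) :
    ∃ c : ℝ, ∀ v : ℝ → ℝ, ContinuousOn v (Set.Icc (0:ℝ) 1) →
      ∀ M : ℝ, (∀ t ∈ Set.Icc (0:ℝ) 1, |v t| ≤ M) →
      ∀ x ∈ Set.Icc (0:ℝ) 1, ∀ y ∈ Set.Icc (0:ℝ) 1, x ≠ y →
        |(∫ s in (0:ℝ)..x, Real.log (x - s) * k s x * v s)
          - ∫ s in (0:ℝ)..y, Real.log (y - s) * k s y * v s|
          ≤ c * M * |x - y| ^ κ := by
  have h1κ : (0:ℝ) < 1 - κ := by linarith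
  -- bound on k
  obtain ⟨B0, hB0⟩ := (isCompact_Icc.prod isCompact_Icc).exists_bound_of_continuousOn hk
  set B : ℝ := max B0 0 with hBdef
  have hB : ∀ s ∈ Set.Icc (0:ℝ) 1, ∀ t ∈ Set.Icc (0:ℝ) 1, |k s t| ≤ B := by
    intro s hs t ht
    exact le_trans (by simpa using hB0 (s, t) ⟨hs, ht⟩) (le_max_left _ _)
  have hBnn : 0 ≤ B := le_max_right _ _
  have hL : 0 ≤ L := by
    have h := hHol 0 ⟨le_refl _, zero_le_one⟩ 0 ⟨le_refl _, zero_le_one⟩ 1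
      ⟨zero_le_one, le_refl _⟩
    simp [Real.one_rpow] at h
    exact le_trans (abs_nonneg _) h
  refine ⟨(L + 2 * B) / (κ * (1 - κ)), ?_⟩
  intro v hv M hM
  have hM0 : 0 ≤ M := le_trans (abs_nonneg _) (hM 0 ⟨le_refl _, zero_le_one⟩)
  -- generic integrability of rpow translates
  have hrpow : ∀ r : ℝ, -1 < r → ∀ d a b : ℝ,
      IntervalIntegrable (fun s => (d - s) ^ r) volume a b := by
    intro r hr d a b
    have := (intervalIntegral.intervalIntegrable_rpow' (r := r) hr
      (a := d - a) (b := d - b)).comp_sub_left d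
    simpa using this
  -- generic log bound
  have hlogb : ∀ d : ℝ, d ≤ 1 → ∀ s, 0 ≤ s → s ≤ d →
      |Real.log (d - s)| ≤ (d - s) ^ (κ - 1) / (1 - κ) := by
    intro d hd1 s hs0 hsd
    rcases eq_or_lt_of_le hsd with heq | hlt
    · rw [heq]
      simp [Real.zero_rpow (by linarith : κ - 1 ≠ 0)]
    · exact aux_log_abs_le hκ1 (by linarith) (by linarith)
  -- generic integrability of s ↦ log (d - s)
  have hlogint : ∀ d a b : ℝ, 0 ≤ a → a ≤ b → b ≤ d → d ≤ 1 →
      IntervalIntegrable (fun s => Real.log (d - s)) volume a b := by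
    intro d a b ha hab hbd hd1
    refine ((hrpow (κ - 1) (by linarith) d a b).div_const (1 - κ)).mono_fun
      ((Real.measurable_log.comp (measurable_const.sub measurable_id)).aestronglyMeasurable) ?_
    filter_upwards [ae_restrict_mem measurableSet_uIoc] with s hs
    rw [Set.uIoc_of_le hab] at hs
    have h1 := hlogb d hd1 s (ha.trans hs.1.le) (hs.2.trans hbd)
    calc ‖Real.log (d - s)‖ ≤ (d - s) ^ (κ - 1) / (1 - κ) := h1
      _ ≤ ‖(d - s) ^ (κ - 1) / (1 - κ)‖ := le_abs_self _
  -- continuity of slices of k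
  have hkslice : ∀ t ∈ Set.Icc (0:ℝ) 1, ContinuousOn (fun s => k s t) (Set.Icc (0:ℝ) 1) := by
    intro t ht
    exact hk.comp ((continuous_id.prodMk continuous_const).continuousOn)
      (fun s hs => Set.mk_mem_prod hs ht)
  -- key estimate for y < x
  have key : ∀ x ∈ Set.Icc (0:ℝ) 1, ∀ y ∈ Set.Icc (0:ℝ) 1, y < x →
      |(∫ s in (0:ℝ)..x, Real.log (x - s) * k s x * v s)
        - ∫ s in (0:ℝ)..y, Real.log (y - s) * k s y * v s|
        ≤ (L + 2 * B) / (κ * (1 - κ)) * M * (x - y) ^ κ := by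
    intro x hx y hy hyx
    obtain ⟨hy0, hy1⟩ := hy
    obtain ⟨hx0', hx1⟩ := hx
    have hx0 : 0 < x := lt_of_le_of_lt hy0 hyx
    have hh0 : 0 < x - y := by linarith
    have hh1 : x - y ≤ 1 := by linarith
    have hhκ : 0 ≤ (x - y) ^ κ := Real.rpow_nonneg hh0.le κ
    set f1 : ℝ → ℝ := fun s => Real.log (x - s) * k s x * v s with hf1
    set f2 : ℝ → ℝ := fun s => Real.log (y - s) * k s y * v s with hf2
    have hsub0y : Set.uIcc (0:ℝ) y ⊆ Set.Icc (0:ℝ) 1 := by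
      rw [Set.uIcc_of_le hy0]; exact Set.Icc_subset_Icc (le_refl _) hy1
    have hsubyx : Set.uIcc y x ⊆ Set.Icc (0:ℝ) 1 := by
      rw [Set.uIcc_of_le hyx.le]; exact Set.Icc_subset_Icc hy0 hx1
    have hf1_0y : IntervalIntegrable f1 volume 0 y :=
      ((hlogint x 0 y le_rfl hy0 hyx.le hx1).mul_continuousOn
        ((hkslice x ⟨hx0.le, hx1⟩).mono hsub0y)).mul_continuousOn (hv.mono hsub0y)
    have hf1_yx : IntervalIntegrable f1 volume y x :=
      ((hlogint x y x hy0 hyx.le le_rfl hx1).mul_continuousOn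
        ((hkslice x ⟨hx0.le, hx1⟩).mono hsubyx)).mul_continuousOn (hv.mono hsubyx)
    have hf2_0y : IntervalIntegrable f2 volume 0 y :=
      ((hlogint y 0 y le_rfl hy0 le_rfl hy1).mul_continuousOn
        ((hkslice y ⟨hy0, hy1⟩).mono hsub0y)).mul_continuousOn (hv.mono hsub0y)
    -- split
    have hsplit : (∫ s in (0:ℝ)..x, f1 s)
        = (∫ s in (0:ℝ)..y, f1 s) + ∫ s in y..x, f1 s :=
      (intervalIntegral.integral_add_adjacent_intervals hf1_0y hf1_yx).symm
    have hdiff : (∫ s in (0:ℝ)..y, f1 s) - (∫ s in (0:ℝ)..y, f2 s)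
        = ∫ s in (0:ℝ)..y, (f1 s - f2 s) :=
      (intervalIntegral.integral_sub hf1_0y hf2_0y).symm
    set C1 : ℝ := L * M * (x - y) ^ κ / (1 - κ) with hC1
    set C2 : ℝ := B * M * (x - y) ^ κ / κ with hC2
    have hC1nn : 0 ≤ C1 := by positivity
    have hC2nn : 0 ≤ C2 := by positivity
    set G : ℝ → ℝ := fun s => C1 * (x - s) ^ (κ - 1) + C2 * (y - s) ^ (-κ) with hG
    have hGint : IntervalIntegrable G volume 0 y :=
      (((hrpow (κ - 1) (by linarith) x 0 y).const_mul C1)).add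
        (((hrpow (-κ) (by linarith) y 0 y).const_mul C2))
    -- pointwise estimate on (0, y), a.e. (excluding s = y)
    have hEptwise : ∀ᵐ s ∂(volume.restrict (Set.uIoc 0 y)), ‖f1 s - f2 s‖ ≤ G s := by
      have hne : ∀ᵐ s ∂(volume.restrict (Set.uIoc 0 y)), s ≠ y :=
        ae_restrict_of_ae (by
          refine ae_iff.mpr ?_
          simpa using measure_singleton (α := ℝ) y)
      filter_upwards [ae_restrict_mem measurableSet_uIoc, hne] with s hs hsne
      rw [Set.uIoc_of_le hy0] at hs
      have hs0 : 0 ≤ s := hs.1.le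
      have hsy : s < y := lt_of_le_of_ne hs.2 hsne
      have hs1 : s ≤ 1 := by linarith
      have hvs : |v s| ≤ M := hM s ⟨hs0, hs1⟩
      have hks : |k s y| ≤ B := hB s ⟨hs0, hs1⟩ y ⟨hy0, hy1⟩
      have hkH : |k s x - k s y| ≤ L * (x - y) ^ κ := by
        have := hHol s ⟨hs0, hs1⟩ x ⟨hx0.le, hx1⟩ y ⟨hy0, hy1⟩
        rwa [abs_of_pos hh0] at this
      have hlog1 : |Real.log (x - s)| ≤ (x - s) ^ (κ - 1) / (1 - κ) :=
        hlogb x hx1 s hs0 (by linarith)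
      have hlog2 : |Real.log (x - s) - Real.log (y - s)|
          ≤ (x - y) ^ κ * (y - s) ^ (-κ) / κ := by
        have hb : 0 < y - s := by linarith
        have h5 : Real.log (x - s) - Real.log (y - s)
            ≤ (x - y) ^ κ * (y - s) ^ (-κ) / κ := by
          have h6 := aux_log_sub_log hκ hκ1.le hb hh0
          have h7 : y - s + (x - y) = x - s := by ring
          rw [h7] at h6
          linarith [h6]
        have h8 : 0 ≤ Real.log (x - s) - Real.log (y - s) := by
          have := Real.log_le_log hb (by linarith : y - s ≤ x - s)
          linarith
        rw [abs_of_nonneg h8]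
        exact h5
      have hxs_nn : 0 ≤ (x - s) ^ (κ - 1) := Real.rpow_nonneg (by linarith) _
      have hys_nn : 0 ≤ (y - s) ^ (-κ) := Real.rpow_nonneg (by linarith) _
      have hxs_e1 : 0 ≤ (x - s) ^ (κ - 1) / (1 - κ) := div_nonneg hxs_nn h1κ.le
      have hident : f1 s - f2 s
          = Real.log (x - s) * (k s x - k s y) * v s
            + (Real.log (x - s) - Real.log (y - s)) * k s y * v s := by
        simp only [hf1, hf2]; ring
      rw [Real.norm_eq_abs, hident]
      have hT1 : |Real.log (x - s) * (k s x - k s y) * v s|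
          ≤ ((x - s) ^ (κ - 1) / (1 - κ)) * (L * (x - y) ^ κ) * M := by
        rw [abs_mul, abs_mul]
        have h9 : |Real.log (x - s)| * |k s x - k s y|
            ≤ ((x - s) ^ (κ - 1) / (1 - κ)) * (L * (x - y) ^ κ) :=
          mul_le_mul hlog1 hkH (abs_nonneg _) hxs_e1
        exact mul_le_mul h9 hvs (abs_nonneg _)
          (mul_nonneg hxs_e1 (by positivity))
      have hT2 : |(Real.log (x - s) - Real.log (y - s)) * k s y * v s|
          ≤ ((x - y) ^ κ * (y - s) ^ (-κ) / κ) * B * M := by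
        rw [abs_mul, abs_mul]
        have h9 : |Real.log (x - s) - Real.log (y - s)| * |k s y|
            ≤ ((x - y) ^ κ * (y - s) ^ (-κ) / κ) * B :=
          mul_le_mul hlog2 hks (abs_nonneg _)
            (div_nonneg (mul_nonneg hhκ hys_nn) hκ.le)
        exact mul_le_mul h9 hvs (abs_nonneg _)
          (mul_nonneg (div_nonneg (mul_nonneg hhκ hys_nn) hκ.le) hBnn)
      have hGs : G s = ((x - s) ^ (κ - 1) / (1 - κ)) * (L * (x - y) ^ κ) * M
          + ((x - y) ^ κ * (y - s) ^ (-κ) / κ) * B * M := by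
        simp only [hG, hC1, hC2]; ring
      calc |Real.log (x - s) * (k s x - k s y) * v s
            + (Real.log (x - s) - Real.log (y - s)) * k s y * v s|
          ≤ |Real.log (x - s) * (k s x - k s y) * v s|
            + |(Real.log (x - s) - Real.log (y - s)) * k s y * v s| := abs_add_le _ _
        _ ≤ _ := by rw [hGs]; exact add_le_add hT1 hT2
    have hE1 : |∫ s in (0:ℝ)..y, (f1 s - f2 s)| ≤ |∫ s in (0:ℝ)..y, G s| := by
      simpa [Real.norm_eq_abs] using
        intervalIntegral.norm_integral_le_abs_of_norm_le hEptwise hGint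
    -- compute ∫ G
    have hIa : (∫ s in (0:ℝ)..y, (x - s) ^ (κ - 1))
        = (x ^ κ - (x - y) ^ κ) / κ := by
      rw [intervalIntegral.integral_comp_sub_left (fun u => u ^ (κ - 1)) x]
      rw [integral_rpow (Or.inl (by linarith))]
      rw [sub_add_cancel]
      norm_num
    have hIb : (∫ s in (0:ℝ)..y, (y - s) ^ (-κ)) = y ^ (1 - κ) / (1 - κ) := by
      rw [intervalIntegral.integral_comp_sub_left (fun u => u ^ (-κ)) y,
        integral_rpow (Or.inl (by linarith))]
      simp only [sub_zero, sub_self]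
      rw [Real.zero_rpow (by linarith : -κ + 1 ≠ 0), show -κ + 1 = 1 - κ by ring]
      norm_num
    have hGval : (∫ s in (0:ℝ)..y, G s)
        = C1 * ((x ^ κ - (x - y) ^ κ) / κ) + C2 * (y ^ (1 - κ) / (1 - κ)) := by
      simp only [hG]
      rw [intervalIntegral.integral_add ((hrpow (κ - 1) (by linarith) x 0 y).const_mul C1)
        ((hrpow (-κ) (by linarith) y 0 y).const_mul C2),
        intervalIntegral.integral_const_mul, intervalIntegral.integral_const_mul, hIa, hIb]
    have hIa_nn : 0 ≤ (x ^ κ - (x - y) ^ κ) / κ := by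
      have h11 : (x - y) ^ κ ≤ x ^ κ := Real.rpow_le_rpow hh0.le (by linarith) hκ.le
      exact div_nonneg (by linarith) hκ.le
    have hIa_le : (x ^ κ - (x - y) ^ κ) / κ ≤ 1 / κ := by
      have hxκ : x ^ κ ≤ 1 := Real.rpow_le_one hx0.le hx1 hκ.le
      gcongr
      linarith
    have hIb_nn : 0 ≤ y ^ (1 - κ) / (1 - κ) := by positivity
    have hIb_le : y ^ (1 - κ) / (1 - κ) ≤ 1 / (1 - κ) := by
      have : y ^ (1 - κ) ≤ 1 := Real.rpow_le_one hy0 hy1 h1κ.le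
      gcongr
    have hE1' : |∫ s in (0:ℝ)..y, G s| ≤ C1 * (1 / κ) + C2 * (1 / (1 - κ)) := by
      rw [hGval, abs_of_nonneg (add_nonneg (mul_nonneg hC1nn hIa_nn)
        (mul_nonneg hC2nn hIb_nn))]
      exact add_le_add (mul_le_mul_of_nonneg_left hIa_le hC1nn)
        (mul_le_mul_of_nonneg_left hIb_le hC2nn)
    -- second piece
    have hE2ptwise : ∀ᵐ s ∂(volume.restrict (Set.uIoc y x)),
        ‖f1 s‖ ≤ B * M * ((x - s) ^ (κ - 1) / (1 - κ)) := by
      filter_upwards [ae_restrict_mem measurableSet_uIoc] with s hs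
      rw [Set.uIoc_of_le hyx.le] at hs
      have hs0 : 0 ≤ s := hy0.trans hs.1.le
      have hs1 : s ≤ 1 := hs.2.trans hx1
      have h1 := hlogb x hx1 s hs0 hs.2
      have hvs : |v s| ≤ M := hM s ⟨hs0, hs1⟩
      have hks : |k s x| ≤ B := hB s ⟨hs0, hs1⟩ x ⟨hx0.le, hx1⟩
      have hxs_nn : 0 ≤ (x - s) ^ (κ - 1) := Real.rpow_nonneg (by linarith [hs.2]) _
      have hxs_e1 : 0 ≤ (x - s) ^ (κ - 1) / (1 - κ) := div_nonneg hxs_nn h1κ.le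
      rw [Real.norm_eq_abs, hf1, abs_mul, abs_mul]
      calc |Real.log (x - s)| * |k s x| * |v s|
          ≤ ((x - s) ^ (κ - 1) / (1 - κ)) * B * M := by
            exact mul_le_mul (mul_le_mul h1 hks (abs_nonneg _) hxs_e1) hvs
              (abs_nonneg _) (mul_nonneg hxs_e1 hBnn)
        _ = B * M * ((x - s) ^ (κ - 1) / (1 - κ)) := by ring
    have hE2int : IntervalIntegrable
        (fun s => B * M * ((x - s) ^ (κ - 1) / (1 - κ))) volume y x :=
      ((hrpow (κ - 1) (by linarith) x y x).div_const (1 - κ)).const_mul (B * M)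
    have hE2 : |∫ s in y..x, f1 s| ≤ B * M * ((x - y) ^ κ / κ) / (1 - κ) := by
      have h10 := intervalIntegral.norm_integral_le_abs_of_norm_le hE2ptwise hE2int
      rw [Real.norm_eq_abs] at h10
      have hJ : (∫ s in y..x, (x - s) ^ (κ - 1)) = (x - y) ^ κ / κ := by
        rw [intervalIntegral.integral_comp_sub_left (fun u => u ^ (κ - 1)) x,
          integral_rpow (Or.inl (by linarith)), sub_add_cancel, sub_self,
          Real.zero_rpow hκ.ne']
        norm_num
      have hIc : (∫ s in y..x, B * M * ((x - s) ^ (κ - 1) / (1 - κ)))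
          = B * M * ((x - y) ^ κ / κ) / (1 - κ) := by
        have hfun : (fun s => B * M * ((x - s) ^ (κ - 1) / (1 - κ)))
            = fun s => (B * M / (1 - κ)) * (x - s) ^ (κ - 1) := by
          funext s; ring
        rw [hfun, intervalIntegral.integral_const_mul, hJ]
        ring
      rw [hIc] at h10
      calc |∫ s in y..x, f1 s| ≤ |B * M * ((x - y) ^ κ / κ) / (1 - κ)| := h10
        _ = B * M * ((x - y) ^ κ / κ) / (1 - κ) := abs_of_nonneg (by positivity)
    -- combine
    rw [hsplit]
    have hfinal : |(∫ s in (0:ℝ)..y, f1 s) + (∫ s in y..x, f1 s) - ∫ s in (0:ℝ)..y, f2 s|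
        ≤ |∫ s in (0:ℝ)..y, (f1 s - f2 s)| + |∫ s in y..x, f1 s| := by
      rw [show (∫ s in (0:ℝ)..y, f1 s) + (∫ s in y..x, f1 s) - ∫ s in (0:ℝ)..y, f2 s
        = ((∫ s in (0:ℝ)..y, f1 s) - ∫ s in (0:ℝ)..y, f2 s) + ∫ s in y..x, f1 s by ring,
        hdiff]
      exact abs_add_le _ _
    refine le_trans hfinal ?_
    refine le_trans (add_le_add (le_trans hE1 hE1') hE2) ?_
    have hexp : C1 * (1 / κ) + C2 * (1 / (1 - κ)) + B * M * ((x - y) ^ κ / κ) / (1 - κ)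
        = (L + 2 * B) / (κ * (1 - κ)) * M * (x - y) ^ κ := by
      simp only [hC1, hC2]
      field_simp
      ring
    rw [hexp]
  -- conclude from key by symmetry
  intro x hx y hy hne
  rcases hne.lt_or_gt with hlt | hlt
  · have h := key y hy x hx hlt
    rw [abs_sub_comm] at h
    rwa [show |x - y| = y - x from by
      rw [abs_sub_comm]; exact abs_of_pos (by linarith)]
  · have h := key x hx y hy hlt
    rwa [show |x - y| = x - y from abs_of_pos (by linarith)]
end
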